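/- (Enomoto, Ohba, Ota, Sakamoto) For every integer k ≥ 2, the complete k-partite graph K_{4,2*(k-1)}, with one part of size 4 and k−1 parts of size 2, has choice number k if k is odd, and choice number k+1 if k is even. -/

import Mathlib

/-- `G` has a proper coloring in which every vertex gets a color from its own list. -/
def ListColorable {V : Type*} (G : SimpleGraph V) (L : V → Finset ℕ) : Prop :=
  ∃ c : V → ℕ, (∀ v, c v ∈ L v) ∧ ∀ ⦃u w⦄, G.Adj u w → c u ≠ c w

/-- `G` is `k`-choosable: `L`-colorable for every list assignment with all lists of size ≥ `k`. -/
def Choosable {V : Type*} (G : SimpleGraph V) (k : ℕ) : Prop :=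
  ∀ L : V → Finset ℕ, (∀ v, k ≤ (L v).card) → ListColorable G L

/-!
`K_{4,2*(k-1)}` contains `K_k`, so its choice number is at least `k`. Splitting its part of size
four into two pairs makes it a subgraph of `K_{2*(k+1)}`, which is `(k+1)`-choosable by
Erdős–Rubin–Taylor. For even `k`, lists drawn from four blocks of `k/2` colors defeat `k`-lists:
the vertices on each side of the pairs leave exactly one color of their common list unused, and
no two such leftover colors meet all four lists of the big part.

For odd `k` there are an even number `r = k - 1` of pairs, with lists of size `r + 1`. A pair
whose two lists share a color takes it and is removed; a big-part list missing that color then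
exceeds the number of remaining pairs by two, which replaces parity in the count below.
Otherwise Hall's theorem colors the pairs injectively while reserving at most two colors for the
big part, unless one side of every pair carries the same list `Z`. In that case the big part
takes one color of `Z` and colors outside `Z`; when all partner lists coincide too, the choice
exists by a double count in which `4uv < (r + 1)²` for `u + v ≤ r + 1`, as `r + 1` is odd.
-/

open Finset Function

section PairColoring

variable {α ι κ : Type*}

/-- A list coloring of the complete multipartite graph whose parts are the pairs `{i} × Bool`. -/
def IsPairColoring (L : ι × Bool → Finset α) (c : ι × Bool → α) : Prop :=
  (∀ p, c p ∈ L p) ∧ ∀ p q, p.1 ≠ q.1 → c p ≠ c q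

theorem IsPairColoring.of_injective {L : ι × Bool → Finset α} {c : ι × Bool → α}
    (hc : Injective c) (hL : ∀ p, c p ∈ L p) : IsPairColoring L c :=
  ⟨hL, fun _ _ h => hc.ne fun hpq => h (congrArg Prod.fst hpq)⟩

def extendPair [DecidableEq ι] (i₀ : ι) (e : α) (c : {i // i ≠ i₀} × Bool → α) : ι × Bool → α :=
  fun p => if h : p.1 = i₀ then e else c (⟨p.1, h⟩, p.2)

theorem extendPair_ne [DecidableEq ι] {i₀ : ι} {e a : α} {c : {i // i ≠ i₀} × Bool → α}
    (he : a ≠ e) (hc : ∀ q, a ≠ c q) (p : ι × Bool) : a ≠ extendPair i₀ e c p := by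
  unfold extendPair; split_ifs
  exacts [he, hc _]

variable [DecidableEq α]

theorem IsPairColoring.extendPair [DecidableEq ι] {L : ι × Bool → Finset α} {i₀ : ι} {e : α}
    (he : ∀ b, e ∈ L (i₀, b)) {c : {i // i ≠ i₀} × Bool → α}
    (hc : IsPairColoring (fun p => (L (p.1.1, p.2)).erase e) c) :
    IsPairColoring L (extendPair i₀ e c) := by
  have hce : ∀ q, c q ≠ e := fun q => ne_of_mem_erase (hc.1 q)
  refine ⟨fun ⟨i, b⟩ => ?_, fun ⟨i, b⟩ ⟨i', b'⟩ hii' => ?_⟩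
  · by_cases h : i = i₀
    · subst h; simpa [_root_.extendPair] using he b
    · simpa [_root_.extendPair, h] using mem_of_mem_erase (hc.1 (⟨i, h⟩, b))
  · by_cases h : i = i₀ <;> by_cases h' : i' = i₀ <;>
      simp only [_root_.extendPair, h, h', dite_true, dite_false]
    · exact absurd (h.trans h'.symm) hii'
    · exact (hce _).symm
    · exact hce _
    · exact hc.2 _ _ fun hq => hii' (congrArg Subtype.val hq)

theorem card_image_fst_eq_or_exists_pair [DecidableEq κ] (s : Finset (κ × Bool)) :
    #(s.image Prod.fst) = #s ∨ ∃ o, (o, true) ∈ s ∧ (o, false) ∈ s := by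
  by_cases h : ∃ o, (o, true) ∈ s ∧ (o, false) ∈ s
  · exact Or.inr h
  push Not at h
  refine Or.inl (card_image_of_injOn ?_)
  rintro ⟨o, b⟩ hp ⟨o', b'⟩ hq (rfl : o = o')
  cases b <;> cases b'
  exacts [rfl, absurd hp (h o hq), absurd hq (h o hp), rfl]

/-- Hall's theorem for the lists `L p \ F` of pairs with disjoint lists: only large subsets and
transversals of the pairs need to be checked. -/
theorem exists_injective_of_disjoint_pairs [Fintype κ] [DecidableEq κ]
    {L : κ × Bool → Finset α} {F : Finset α} {m : ℕ}
    (hdisj : ∀ o, Disjoint (L (o, true)) (L (o, false))) (hm : ∀ p, m ≤ #(L p))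
    (hκ : Fintype.card κ + #F ≤ m + 1)
    (hlarge : ∀ s, 2 * m < #s + #F → #s ≤ #(s.biUnion fun p => L p \ F))
    (htransversal : ∀ s : Finset (κ × Bool), #s = Fintype.card κ → m < #s + #F →
      (∀ o, ∃ b, (o, b) ∈ s) → #s ≤ #(s.biUnion fun p => L p \ F)) :
    ∃ c, Injective c ∧ ∀ p, c p ∈ L p \ F := by
  refine (all_card_le_biUnion_card_iff_exists_injective _).1 fun s => ?_
  have hsdiff : ∀ p, #(L p) ≤ #(L p \ F) + #F := fun p => by
    have := le_card_sdiff F (L p); omega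
  rcases card_image_fst_eq_or_exists_pair s with himage | ⟨o, ht, hf⟩
  · rcases s.eq_empty_or_nonempty with rfl | ⟨p, hp⟩
    · simp
    have hle : #s ≤ Fintype.card κ := himage ▸ card_le_univ _
    have := card_le_card (subset_biUnion_of_mem (fun p => L p \ F) hp)
    have := hm p; have := hsdiff p
    by_cases heq : #s = Fintype.card κ ∧ m < #s + #F
    · refine htransversal s heq.1 heq.2 fun o => ?_
      have : o ∈ s.image Prod.fst := by
        rw [eq_univ_of_card _ (himage.trans heq.1)]; exact mem_univ o
      obtain ⟨⟨o', b⟩, hs, rfl⟩ := mem_image.1 this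
      exact ⟨b, hs⟩
    omega
  · by_cases hs : 2 * m < #s + #F
    · exact hlarge s hs
    have hsub : (L (o, true) ∪ L (o, false)) \ F ⊆ s.biUnion fun p => L p \ F := by
      rw [union_sdiff_distrib]
      exact union_subset (subset_biUnion_of_mem (fun p => L p \ F) ht)
        (subset_biUnion_of_mem (fun p => L p \ F) hf)
    have h1 := card_le_card hsub
    have h2 := le_card_sdiff F (L (o, true) ∪ L (o, false))
    rw [card_union_of_disjoint (hdisj o)] at h2
    have := hm (o, true); have := hm (o, false)
    omega

theorem card_mul_le_card_biUnion {β : Type*} {t : β → Finset α} {u s : Finset β} {m : ℕ}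
    (hu : u ⊆ s) (hpw : (u : Set β).PairwiseDisjoint t) (hm : ∀ x ∈ u, m ≤ #(t x)) :
    #u * m ≤ #(s.biUnion t) :=
  calc #u * m ≤ ∑ x ∈ u, #(t x) := by rw [← smul_eq_mul]; exact card_nsmul_le_sum _ _ _ hm
    _ = #(u.biUnion t) := (card_biUnion hpw).symm
    _ ≤ #(s.biUnion t) := card_le_card (biUnion_subset_biUnion_of_subset_left t hu)

theorem exists_injective_or_forall_eq [Fintype ι] {M : ι → Finset α} {T : Finset α}
    (hM : ∀ i, Fintype.card ι + 1 ≤ #(M i)) (hT : #T ≤ 2) :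
    (∃ R, Injective R ∧ ∀ i, R i ∈ M i \ T) ∨ ∀ i i', M i = M i' := by
  by_cases hall : ∀ s : Finset ι, #s ≤ #(s.biUnion fun i => M i \ T)
  · exact .inl ((all_card_le_biUnion_card_iff_exists_injective _).1 hall)
  push Not at hall
  obtain ⟨s, hs⟩ := hall
  set U := s.biUnion fun i => M i \ T
  have hsdiff : ∀ i, #(M i) ≤ #(M i \ T) + #T := fun i => by
    have := le_card_sdiff T (M i); omega
  obtain ⟨i₀, hi₀⟩ : s.Nonempty := card_pos.1 (by omega)
  have : #(M i₀ \ T) ≤ #U := card_le_card (subset_biUnion_of_mem (fun i => M i \ T) hi₀)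
  have := hM i₀; have := hsdiff i₀; have := card_le_univ s
  have hsuniv : s = univ := eq_univ_of_card s (by omega)
  have heq : ∀ i, M i = U ∪ T := fun i => by
    refine eq_of_subset_of_card_le (fun x hx => ?_) ((card_union_le _ _).trans ?_)
    · by_cases hxT : x ∈ T
      · exact mem_union_right _ hxT
      · exact mem_union_left _ (mem_biUnion.2 ⟨i, hsuniv ▸ mem_univ i, mem_sdiff.2 ⟨hx, hxT⟩⟩)
    · have := hM i; omega
  exact .inr fun i i' => (heq i).trans (heq i').symm

/-- Erdős–Rubin–Taylor: `K_{2*n}` is `n`-choosable. -/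
theorem exists_isPairColoring_of_card_le [Fintype ι] [DecidableEq ι] (L : ι × Bool → Finset α)
    (hL : ∀ p, Fintype.card ι ≤ #(L p)) : ∃ c, IsPairColoring L c := by
  induction h : Fintype.card ι using Nat.strong_induction_on generalizing ι with
  | _ n ih =>
  by_cases hdisj : ∀ i, Disjoint (L (i, true)) (L (i, false))
  · obtain ⟨c, hc, hcL⟩ := exists_injective_of_disjoint_pairs (F := ∅) hdisj (h ▸ hL)
      (by simp [h]) (fun s hs => by have := card_le_univ s; simp [h] at this hs; omega)
      (fun s hs hlt _ => by simp at hlt; omega)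
    exact ⟨c, .of_injective hc fun p => by simpa using hcL p⟩
  push Not at hdisj
  obtain ⟨i₀, hi₀⟩ := hdisj
  obtain ⟨e, het, hef⟩ := not_disjoint_iff.1 hi₀
  have hcard : Fintype.card {i // i ≠ i₀} = n - 1 := by simp [h]
  have hn : 0 < n := h ▸ Fintype.card_pos_iff.2 ⟨i₀⟩
  obtain ⟨c, hc⟩ := ih (n - 1) (by omega) (ι := {i // i ≠ i₀})
    (fun p => (L (p.1.1, p.2)).erase e) (fun p => by
      have := pred_card_le_card_erase (s := L (p.1.1, p.2)) (a := e)
      have := hL (p.1.1, p.2); omega) hcard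
  exact ⟨_, hc.extendPair (Bool.forall_bool.2 ⟨hef, het⟩)⟩

end PairColoring

section QuadPairs

variable {α ι κ : Type*}

/-- `K_{4,2,…,2}` can be colored from the lists `L` of its pair vertices and the lists `A` of its
part of size four. -/
def QuadPairColorable (L : ι × Bool → Finset α) (A : Fin 4 → Finset α) : Prop :=
  ∃ (c : ι × Bool → α) (a : Fin 4 → α),
    IsPairColoring L c ∧ (∀ j, a j ∈ A j) ∧ ∀ j p, a j ≠ c p

theorem quadPairColorable_of_isEmpty [IsEmpty ι] {L : ι × Bool → Finset α}
    {A : Fin 4 → Finset α} (hA : ∀ j, (A j).Nonempty) : QuadPairColorable L A :=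
  ⟨fun p => isEmptyElim p.1, fun j => (hA j).choose, ⟨fun p => isEmptyElim p.1,
    fun p => isEmptyElim p.1⟩, fun j => (hA j).choose_spec, fun _ p => isEmptyElim p.1⟩

def appendPairs (L : ι × Bool → Finset α) (P : κ × Bool → Finset α) :
    (ι ⊕ κ) × Bool → Finset α :=
  fun p => Sum.elim (fun i => L (i, p.2)) (fun k => P (k, p.2)) p.1

def quadEquiv : Bool × Bool ≃ Fin 4 :=
  (Equiv.prodCongr finTwoEquiv.symm finTwoEquiv.symm).trans finProdFinEquiv

theorem card_le_card_filter_isRight_add [Fintype ι] [DecidableEq ι] [DecidableEq κ]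
    (s : Finset ((ι ⊕ κ) × Bool)) :
    #s ≤ #(s.filter fun p => p.1.isRight = true) + Fintype.card ι * 2 := by
  have hleft : #(s.filter fun p => ¬ p.1.isRight = true) ≤ Fintype.card ι * 2 := by
    refine (card_le_card (t := univ.image fun p : ι × Bool => (Sum.inl p.1, p.2))
      fun p hp => ?_).trans (card_image_le.trans (by simp))
    obtain ⟨⟨_ | k, b⟩, -, hp⟩ := p, mem_filter.1 hp
    · simp
    · simp at hp
  have := card_filter_add_card_filter_not (s := s) fun p => p.1.isRight = true
  omega

theorem QuadPairColorable.of_appendPairs {L : ι × Bool → Finset α} {A : Fin 4 → Finset α}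
    {c : (ι ⊕ Bool) × Bool → α} (hc : IsPairColoring (appendPairs L (A ∘ quadEquiv)) c) :
    QuadPairColorable L A :=
  ⟨fun p => c (.inl p.1, p.2), fun j => c (.inr (quadEquiv.symm j).1, (quadEquiv.symm j).2),
    ⟨fun p => hc.1 (.inl p.1, p.2), fun p q h => hc.2 _ _ (by simpa using h)⟩,
    fun j => by simpa [appendPairs] using hc.1 (.inr (quadEquiv.symm j).1, (quadEquiv.symm j).2),
    fun j p => hc.2 _ _ (by simp)⟩

variable [DecidableEq α]

theorem QuadPairColorable.extendPair [DecidableEq ι] {L : ι × Bool → Finset α}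
    {A : Fin 4 → Finset α} {i₀ : ι} {e : α} (he : ∀ b, e ∈ L (i₀, b))
    (h : QuadPairColorable (fun p : {i // i ≠ i₀} × Bool => (L (p.1.1, p.2)).erase e)
      fun j => (A j).erase e) :
    QuadPairColorable L A := by
  obtain ⟨c, a, hc, ha, hac⟩ := h
  exact ⟨_, a, hc.extendPair he, fun j => mem_of_mem_erase (ha j),
    fun j => extendPair_ne (ne_of_mem_erase (ha j)) (hac j)⟩

theorem quadPairColorable_of_forall_mem [Fintype ι] [DecidableEq ι] {L : ι × Bool → Finset α}
    {A : Fin 4 → Finset α} (hL : ∀ p, Fintype.card ι + 1 ≤ #(L p)) {e : α}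
    (he : ∀ j, e ∈ A j) : QuadPairColorable L A := by
  obtain ⟨c, hcL, hc⟩ := exists_isPairColoring_of_card_le (fun p => (L p).erase e) fun p => by
    have := pred_card_le_card_erase (s := L p) (a := e); have := hL p; omega
  exact ⟨c, fun _ => e, ⟨fun p => mem_of_mem_erase (hcL p), hc⟩, he,
    fun _ p => (ne_of_mem_erase (hcL p)).symm⟩

theorem quadPairColorable_of_card_add_two [Fintype ι] [DecidableEq ι] {L : ι × Bool → Finset α}
    {A : Fin 4 → Finset α} (hL : ∀ p, Fintype.card ι + 2 ≤ #(L p))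
    (hA : ∀ j, Fintype.card ι + 2 ≤ #(A j)) : QuadPairColorable L A := by
  obtain ⟨c, hc⟩ := exists_isPairColoring_of_card_le (appendPairs L (A ∘ quadEquiv)) fun
    | (.inl i, b) => by simpa [appendPairs] using hL (i, b)
    | (.inr t, b) => by simpa [appendPairs] using hA _
  exact .of_appendPairs hc

/-- The sides `(i, z i)` take distinct colors of `Z` other than `x`, their partners the colors
`R i`. -/
theorem quadPairColorable_of_forall_side_eq [Fintype ι] {L : ι × Bool → Finset α}
    {A : Fin 4 → Finset α} (z : ι → Bool) {Z : Finset α} (hZ : ∀ i, L (i, z i) = Z)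
    (hZcard : #Z = Fintype.card ι + 1)
    {x : α} (hx : x ∈ Z) (R : ι → α) (hR : Injective R) (hRL : ∀ i, R i ∈ L (i, !z i))
    (hRZ : ∀ i, R i ∉ Z) (hA : ∀ j, x ∈ A j ∨ ∃ y ∈ A j, y ∉ Z ∧ ∀ i, R i ≠ y) :
    QuadPairColorable L A := by
  obtain ⟨ζ⟩ : Nonempty (ι ↪ Z.erase x) :=
    Function.Embedding.nonempty_of_card_le (by simp [card_erase_of_mem hx, hZcard])
  have hζZ : ∀ i, (ζ i : α) ∈ Z := fun i => mem_of_mem_erase (ζ i).2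
  have hζx : ∀ i, (ζ i : α) ≠ x := fun i => ne_of_mem_erase (ζ i).2
  choose a ha using fun j => show ∃ a ∈ A j, a = x ∨ a ∉ Z ∧ ∀ i, R i ≠ a by
    rcases hA j with h | ⟨y, hy, hyZ, hyR⟩
    exacts [⟨x, h, .inl rfl⟩, ⟨y, hy, .inr ⟨hyZ, hyR⟩⟩]
  refine ⟨fun p => if p.2 = z p.1 then ζ p.1 else R p.1, a, ⟨fun ⟨i, b⟩ => ?_,
    fun ⟨i, b⟩ ⟨i', b'⟩ hii' => ?_⟩, fun j => (ha j).1, fun j ⟨i, b⟩ => ?_⟩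
  · dsimp only; split_ifs with hb
    · exact hb ▸ hZ i ▸ hζZ i
    · simpa [Bool.eq_not_of_ne hb] using hRL i
  · dsimp only at hii' ⊢
    have hζ : (ζ i : α) ≠ ζ i' := fun h => hii' (ζ.injective (Subtype.ext h))
    split_ifs
    exacts [hζ, fun h => hRZ i' (h ▸ hζZ i), fun h => hRZ i (h ▸ hζZ i'), hR.ne hii']
  · dsimp only; split_ifs
    · rcases (ha j).2 with h | h
      exacts [h ▸ (hζx i).symm, fun e => h.1 (e ▸ hζZ i)]
    · rcases (ha j).2 with h | h
      exacts [fun e => hRZ i (e ▸ h ▸ hx), (h.2 i).symm]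

theorem exists_forall_side_eq_of_not_exists_injective [Fintype ι] [DecidableEq ι]
    {L : ι × Bool → Finset α} {F : Finset α}
    (hdisj : ∀ i, Disjoint (L (i, true)) (L (i, false)))
    (hL : ∀ p, Fintype.card ι + 1 ≤ #(L p)) (hF : #F ≤ 2)
    (h : ¬ ∃ c, Injective c ∧ ∀ p, c p ∈ L p \ F) :
    ∃ (z : ι → Bool) (Z : Finset α), (∀ i, L (i, z i) = Z) ∧ #Z = Fintype.card ι + 1 ∧ F ⊆ Z := by
  by_contra hside
  refine h (exists_injective_of_disjoint_pairs hdisj hL (by omega) (fun s hs => ?_) ?_)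
  · have := card_le_univ s
    simp at this; omega
  intro s hs _ hhit
  by_contra! hlt
  set C := s.biUnion fun p => L p \ F
  choose z hz using hhit
  have hsub : ∀ i, L (i, z i) ⊆ C ∪ F := fun i x hx => by
    by_cases hxF : x ∈ F
    · exact mem_union_right _ hxF
    · exact mem_union_left _ (mem_biUnion.2 ⟨_, hz i, mem_sdiff.2 ⟨hx, hxF⟩⟩)
  have hCF : #(C ∪ F) ≤ Fintype.card ι + 1 := (card_union_le _ _).trans (by omega)
  have heq : ∀ i, L (i, z i) = C ∪ F := fun i =>
    eq_of_subset_of_card_le (hsub i) (hCF.trans (hL _))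
  obtain ⟨⟨i, b⟩, -⟩ : s.Nonempty := card_pos.1 (by omega)
  exact hside ⟨z, C ∪ F, heq, le_antisymm hCF (heq i ▸ hL _), subset_union_right⟩

theorem card_sdiff_add_card_sdiff_le {Z W A : Finset α} (h : A ⊆ Z ∪ W) :
    #(Z \ A) + #(W \ A) + #A ≤ #Z + #W := by
  have hsub : A ⊆ (Z ∩ A) ∪ (W ∩ A) := fun x hx => by
    rcases mem_union.1 (h hx) with hZ | hW
    exacts [mem_union_left _ (mem_inter.2 ⟨hZ, hx⟩), mem_union_right _ (mem_inter.2 ⟨hW, hx⟩)]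
  have := (card_le_card hsub).trans (card_union_le _ _)
  have := card_sdiff_add_card_inter Z A
  have := card_sdiff_add_card_inter W A
  omega

theorem card_mul_card_le_sum [Fintype κ] {Z W : Finset α} {A : κ → Finset α}
    (h : ∀ x ∈ Z, ∀ y ∈ W, ∃ j, x ∉ A j ∧ y ∉ A j ∧ A j ⊆ Z ∪ W) :
    #Z * #W ≤ ∑ j, if A j ⊆ Z ∪ W then #(Z \ A j) * #(W \ A j) else 0 := by
  have hsub : Z ×ˢ W ⊆
      (univ.filter fun j => A j ⊆ Z ∪ W).biUnion fun j => (Z \ A j) ×ˢ (W \ A j) := by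
    rintro ⟨x, y⟩ hxy
    obtain ⟨hx, hy⟩ := mem_product.1 hxy
    obtain ⟨j, hxj, hyj, hj⟩ := h x hx y hy
    exact mem_biUnion.2 ⟨j, by simpa using hj, by simp [hx, hy, hxj, hyj]⟩
  rw [← card_product, ← sum_filter]
  exact (card_le_card hsub).trans (card_biUnion_le.trans_eq (by simp [card_product]))

/-- The double count behind the even case: `4uv < (n+1)²` for `u + v ≤ n + 1` unless
`u = v = (n+1)/2`, which parity excludes. -/
theorem exists_cover_of_card_eq {Z W : Finset α} {A : Fin 4 → Finset α} {n : ℕ}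
    (hZ : #Z = n + 1) (hW : #W = n + 1) (hA : ∀ j, n + 1 ≤ #(A j))
    (hslack : Even n ∨ ∃ j, n + 2 ≤ #(A j)) :
    ∃ x ∈ Z, ∃ y ∈ W, ∀ j, x ∈ A j ∨ y ∈ A j ∨ ¬ A j ⊆ Z ∪ W := by
  by_contra! h
  have hcount := card_mul_card_le_sum h
  set f : Fin 4 → ℕ := fun j => if A j ⊆ Z ∪ W then #(Z \ A j) * #(W \ A j) else 0
  have hf : ∀ j, 4 * f j ≤ (n + 1) ^ 2 ∧ (Even n ∨ n + 2 ≤ #(A j) → 4 * f j < (n + 1) ^ 2) := by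
    intro j
    simp only [f]
    split_ifs with hsub
    · have huv := card_sdiff_add_card_sdiff_le hsub
      have := hA j
      have hamgm := four_mul_le_sq_add #(Z \ A j) #(W \ A j)
      rw [← mul_assoc]
      refine ⟨hamgm.trans (Nat.pow_le_pow_left (by omega) 2), ?_⟩
      rintro (hn | hbig)
      · refine (hamgm.trans (Nat.pow_le_pow_left (by omega) 2)).lt_of_ne fun heq => ?_
        have hodd : Odd ((n + 1) ^ 2) := hn.add_one.pow
        rw [← heq] at hodd
        exact Nat.not_even_iff_odd.2 hodd ⟨2 * (#(Z \ A j) * #(W \ A j)), by ring⟩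
      · exact hamgm.trans_lt (Nat.pow_lt_pow_left (by omega) two_ne_zero)
    · exact ⟨by simp, fun _ => by positivity⟩
  have hlt : ∑ j, 4 * f j < ∑ _j : Fin 4, (n + 1) ^ 2 := by
    refine sum_lt_sum (fun j _ => (hf j).1) ?_
    rcases hslack with hn | ⟨j, hj⟩
    exacts [⟨0, mem_univ _, (hf 0).2 (.inl hn)⟩, ⟨j, mem_univ _, (hf j).2 (.inr hj)⟩]
  have hsum := Nat.mul_le_mul_left 4 hcount
  rw [hZ, hW, mul_sum] at hsum
  simp only [sum_const, card_univ, Fintype.card_fin, smul_eq_mul, sq] at hlt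
  exact (hsum.trans_lt hlt).false

theorem Fin.exists_others_of_ne : ∀ j₁ j₂ : Fin 4, j₁ ≠ j₂ →
    ∃ j₃ j₄ : Fin 4, ∀ j, j = j₁ ∨ j = j₂ ∨ j = j₃ ∨ j = j₄ := by
  decide

theorem exists_cover_of_two_cover {Z : Finset α} {A : Fin 4 → Finset α}
    (hA : ∀ j, #Z ≤ #(A j)) {c d : α} (hc : c ∈ Z) (hd : d ∈ Z) (hcd : ∀ j, c ∈ A j ∨ d ∈ A j) :
    ∃ x ∈ Z, ∃ t₁ t₂, ∀ j, x ∈ A j ∨ (t₁ ∈ A j ∧ t₁ ∉ Z) ∨ (t₂ ∈ A j ∧ t₂ ∉ Z) := by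
  obtain ⟨j₁, j₂, hne, hj⟩ := Fintype.exists_ne_map_eq_of_card_lt (fun j => decide (c ∈ A j))
    (by simp)
  obtain ⟨x, hx, hx₁, hx₂⟩ : ∃ x ∈ Z, x ∈ A j₁ ∧ x ∈ A j₂ := by
    by_cases h : c ∈ A j₁
    · exact ⟨c, hc, h, by simpa [h] using hj⟩
    · have h' : c ∉ A j₂ := by simpa [h] using hj
      exact ⟨d, hd, (hcd j₁).resolve_left h, (hcd j₂).resolve_left h'⟩
  have houtside : ∀ j, ∃ t, x ∈ A j ∨ (t ∈ A j ∧ t ∉ Z) := fun j => by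
    by_cases hsub : A j ⊆ Z
    · exact ⟨x, .inl (eq_of_subset_of_card_le hsub (hA j) ▸ hx)⟩
    · obtain ⟨t, ht, htZ⟩ := not_subset.1 hsub
      exact ⟨t, .inr ⟨ht, htZ⟩⟩
  obtain ⟨j₃, j₄, hrest⟩ := Fin.exists_others_of_ne j₁ j₂ hne
  obtain ⟨t₁, ht₁⟩ := houtside j₃
  obtain ⟨t₂, ht₂⟩ := houtside j₄
  refine ⟨x, hx, t₁, t₂, fun j => ?_⟩
  rcases hrest j with rfl | rfl | rfl | rfl
  · exact .inl hx₁
  · exact .inl hx₂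
  · exact ht₁.imp_right .inl
  · exact ht₂.imp_right .inr

theorem quadPairColorable_of_forall_partner_eq [Fintype ι] {L : ι × Bool → Finset α}
    {A : Fin 4 → Finset α} (z : ι → Bool) {Z : Finset α} (hZ : ∀ i, L (i, z i) = Z)
    (hZcard : #Z = Fintype.card ι + 1) (hpartner : ∀ i, Disjoint (L (i, !z i)) Z)
    (heq : ∀ i i', L (i, !z i) = L (i', !z i')) (hL : ∀ p, Fintype.card ι + 1 ≤ #(L p))
    (hA : ∀ j, Fintype.card ι + 1 ≤ #(A j))
    (hslack : Even (Fintype.card ι) ∨ ∃ j, Fintype.card ι + 2 ≤ #(A j)) :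
    QuadPairColorable L A := by
  rcases isEmpty_or_nonempty ι with hι | ⟨⟨i₀⟩⟩
  · exact quadPairColorable_of_isEmpty fun j => card_pos.1 (by have := hA j; omega)
  obtain ⟨W, hW, hWcard⟩ := exists_subset_card_eq (hL (i₀, !z i₀))
  obtain ⟨x, hx, y, hy, hcover⟩ := exists_cover_of_card_eq hZcard hWcard hA hslack
  obtain ⟨R⟩ : Nonempty (ι ↪ W.erase y) :=
    Function.Embedding.nonempty_of_card_le (by simp [card_erase_of_mem hy, hWcard])
  have hRW : ∀ i, (R i : α) ∈ W := fun i => mem_of_mem_erase (R i).2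
  have hWZ : ∀ w ∈ W, w ∉ Z := fun w hw => disjoint_left.1 (hpartner i₀) (hW hw)
  refine quadPairColorable_of_forall_side_eq z hZ hZcard hx (fun i => R i)
    (Subtype.val_injective.comp R.injective) (fun i => heq i₀ i ▸ hW (hRW i))
    (fun i => hWZ _ (hRW i)) fun j => ?_
  rcases hcover j with h | h | h
  · exact .inl h
  · exact .inr ⟨y, h, hWZ y hy, fun i => ne_of_mem_erase (R i).2⟩
  · obtain ⟨w, hw, hwZW⟩ := not_subset.1 h
    simp only [mem_union, not_or] at hwZW
    exact .inr ⟨w, hw, hwZW.1, fun i e => hwZW.2 (e ▸ hRW i)⟩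

theorem quadPairColorable_of_two_cover [Fintype ι] [DecidableEq ι] {L : ι × Bool → Finset α}
    {A : Fin 4 → Finset α} (hdisj : ∀ i, Disjoint (L (i, true)) (L (i, false)))
    (hL : ∀ p, Fintype.card ι + 1 ≤ #(L p)) (hA : ∀ j, Fintype.card ι + 1 ≤ #(A j))
    (hslack : Even (Fintype.card ι) ∨ ∃ j, Fintype.card ι + 2 ≤ #(A j)) {c d : α}
    (hcd : ∀ j, c ∈ A j ∨ d ∈ A j) : QuadPairColorable L A := by
  by_cases hinj : ∃ f, Injective f ∧ ∀ p, f p ∈ L p \ {c, d}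
  · obtain ⟨f, hf, hfL⟩ := hinj
    refine ⟨f, fun j => if c ∈ A j then c else d,
      .of_injective hf fun p => (mem_sdiff.1 (hfL p)).1, fun j => ?_, fun j p => ?_⟩
    · dsimp only; split_ifs with h
      exacts [h, (hcd j).resolve_left h]
    · have hcd : f p ≠ c ∧ f p ≠ d := by simpa using (mem_sdiff.1 (hfL p)).2
      dsimp only; split_ifs
      exacts [hcd.1.symm, hcd.2.symm]
  obtain ⟨z, Z, hZ, hZcard, hcdZ⟩ :=
    exists_forall_side_eq_of_not_exists_injective hdisj hL card_le_two hinj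
  have hpartner : ∀ i, Disjoint (L (i, !z i)) Z := fun i => by
    rw [← hZ i]; cases z i
    exacts [hdisj i, (hdisj i).symm]
  obtain ⟨x, hx, t₁, t₂, hcover⟩ := exists_cover_of_two_cover (fun j => hZcard ▸ hA j)
    (hcdZ (by simp)) (hcdZ (by simp)) hcd
  rcases exists_injective_or_forall_eq (T := {t₁, t₂}) (fun i => hL (i, !z i)) card_le_two with
    ⟨R, hR, hRL⟩ | heq
  · refine quadPairColorable_of_forall_side_eq z hZ hZcard hx R hR
      (fun i => (mem_sdiff.1 (hRL i)).1)
      (fun i => disjoint_left.1 (hpartner i) (mem_sdiff.1 (hRL i)).1) fun j => ?_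
    have hRt : ∀ i, R i ≠ t₁ ∧ R i ≠ t₂ := fun i => by simpa using (mem_sdiff.1 (hRL i)).2
    rcases hcover j with h | ⟨ht, htZ⟩ | ⟨ht, htZ⟩
    exacts [.inl h, .inr ⟨t₁, ht, htZ, fun i => (hRt i).1⟩,
      .inr ⟨t₂, ht, htZ, fun i => (hRt i).2⟩]
  exact quadPairColorable_of_forall_partner_eq z hZ hZcard hpartner heq hL hA hslack

/-- The two big-part vertices sharing `e` take it; the other two form an extra pair. -/
theorem quadPairColorable_of_shared_color [Fintype ι] [DecidableEq ι]
    {L : ι × Bool → Finset α} {A : Fin 4 → Finset α}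
    (hdisj : ∀ i, Disjoint (L (i, true)) (L (i, false)))
    (hL : ∀ p, Fintype.card ι + 1 ≤ #(L p)) (hA : ∀ j, Fintype.card ι + 1 ≤ #(A j))
    {e : α} {j₃ j₄ : Fin 4} (he : ∀ j, j ≠ j₃ → j ≠ j₄ → e ∈ A j)
    (h34 : Disjoint (A j₃) (A j₄)) (he₃ : e ∉ A j₃) (he₄ : e ∉ A j₄) :
    QuadPairColorable L A := by
  set P : Unit × Bool → Finset α := fun q => if q.2 then A j₃ else A j₄
  have hPcard : ∀ b, Fintype.card ι + 1 ≤ #(P ((), b)) := fun b => by cases b <;> exact hA _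
  have hP : ∀ s : Finset ((ι ⊕ Unit) × Bool), ∀ b, (.inr (), b) ∈ s →
      P ((), b) ⊆ s.biUnion fun p => appendPairs L P p \ {e} := fun s b hb => by
    have hPe : P ((), b) \ {e} = P ((), b) := by cases b <;> simpa [P]
    simpa [appendPairs, hPe] using subset_biUnion_of_mem (fun p => appendPairs L P p \ {e}) hb
  obtain ⟨f, hf, hfL⟩ := exists_injective_of_disjoint_pairs (L := appendPairs L P) (F := {e})
    (m := Fintype.card ι + 1) (fun | .inl i => hdisj i | .inr () => h34)
    (fun | (.inl i, b) => hL (i, b) | (.inr (), b) => hPcard b) (by simp)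
    (fun s hs => by
      have hcard := card_le_univ s
      simp only [card_singleton, Fintype.card_prod, Fintype.card_sum, Fintype.card_unit,
        Fintype.card_bool] at hs hcard
      have hsuniv : s = univ := eq_univ_of_card s (by simp; omega)
      have := card_le_card (union_subset (hP s true (by simp [hsuniv]))
        (hP s false (by simp [hsuniv])))
      rw [card_union_of_disjoint (show Disjoint (P ((), true)) (P ((), false)) from h34)] at this
      have := hPcard true; have := hPcard false
      omega)
    (fun s hs _ hhit => by
      obtain ⟨b, hb⟩ := hhit (.inr ())
      have := card_le_card (hP s b hb); have := hPcard b
      simp at hs; omega)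
  have hfe : ∀ p, f p ≠ e := fun p => by simpa using (mem_sdiff.1 (hfL p)).2
  refine ⟨fun p => f (.inl p.1, p.2),
    fun j => if j = j₃ then f (.inr (), true) else if j = j₄ then f (.inr (), false) else e,
    ⟨fun p => by simpa [appendPairs] using (mem_sdiff.1 (hfL (.inl p.1, p.2))).1,
      fun p q h => hf.ne (by simp [h])⟩, fun j => ?_, fun j p => ?_⟩
  · dsimp only; split_ifs with h₃ h₄
    · simpa [appendPairs, P, h₃] using (mem_sdiff.1 (hfL (.inr (), true))).1
    · simpa [appendPairs, P, h₄] using (mem_sdiff.1 (hfL (.inr (), false))).1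
    · exact he j h₃ h₄
  · dsimp only; split_ifs
    exacts [hf.ne (by simp), hf.ne (by simp), (hfe _).symm]

theorem quadPairColorable_of_not_two_cover [Fintype ι] [DecidableEq ι]
    {L : ι × Bool → Finset α} {A : Fin 4 → Finset α}
    (hdisj : ∀ i, Disjoint (L (i, true)) (L (i, false)))
    (hL : ∀ p, Fintype.card ι + 1 ≤ #(L p)) (hA : ∀ j, Fintype.card ι + 1 ≤ #(A j))
    (hcover : ∀ c d, ∃ j, c ∉ A j ∧ d ∉ A j) {e : α} {j₁ j₂ : Fin 4} (hne : j₁ ≠ j₂)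
    (he₁ : e ∈ A j₁) (he₂ : e ∈ A j₂) : QuadPairColorable L A := by
  obtain ⟨j₃, j₄, hrest⟩ := Fin.exists_others_of_ne j₁ j₂ hne
  have hnonempty : ∀ j, (A j).Nonempty := fun j => card_pos.1 (by have := hA j; omega)
  have hcovers : ∀ d, e ∈ A j₃ ∨ d ∈ A j₃ → e ∈ A j₄ ∨ d ∈ A j₄ → False := fun d h₃ h₄ => by
    obtain ⟨j, he, hd⟩ := hcover e d
    rcases hrest j with rfl | rfl | rfl | rfl <;> tauto
  have he : ∀ j, j ≠ j₃ → j ≠ j₄ → e ∈ A j := fun j h₃ h₄ => by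
    rcases hrest j with rfl | rfl | rfl | rfl
    exacts [he₁, he₂, absurd rfl h₃, absurd rfl h₄]
  refine quadPairColorable_of_shared_color hdisj hL hA he
    (disjoint_left.2 fun γ h₃ h₄ => hcovers γ (.inr h₃) (.inr h₄))
    (fun h₃ => hcovers (hnonempty j₄).choose (.inl h₃) (.inr (hnonempty j₄).choose_spec))
    (fun h₄ => hcovers (hnonempty j₃).choose (.inr (hnonempty j₃).choose_spec) (.inl h₄))

theorem quadPairColorable_of_pairwise_disjoint [Fintype ι] [DecidableEq ι]
    {L : ι × Bool → Finset α} {A : Fin 4 → Finset α}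
    (hdisj : ∀ i, Disjoint (L (i, true)) (L (i, false)))
    (hL : ∀ p, Fintype.card ι + 1 ≤ #(L p)) (hA : ∀ j, Fintype.card ι + 1 ≤ #(A j))
    (hApw : Pairwise fun j j' => Disjoint (A j) (A j')) : QuadPairColorable L A := by
  set L' := appendPairs L (A ∘ quadEquiv)
  have hL' : ∀ p, Fintype.card ι + 1 ≤ #(L' p) := fun
    | (.inl i, b) => hL (i, b)
    | (.inr t, b) => hA _
  have hquad : ∀ t b t' b', (t, b) ≠ (t', b') →
      Disjoint (L' (.inr t, b)) (L' (.inr t', b')) := fun t b t' b' h =>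
    hApw (quadEquiv.injective.ne h)
  obtain ⟨f, hf, hfL⟩ := exists_injective_of_disjoint_pairs (L := L') (F := ∅)
    (m := Fintype.card ι + 1)
    (fun | .inl i => hdisj i | .inr t => hquad t true t false (by simp))
    hL' (by simp)
    (fun s hs => by
      -- such an `s` contains at least three of the four big-part vertices
      rw [card_empty, add_zero] at hs
      have hsu := card_le_card_filter_isRight_add s
      set u := s.filter fun p => p.1.isRight = true
      have hu : #u * (Fintype.card ι + 1) ≤ #(s.biUnion fun p => L' p \ ∅) := by
        refine card_mul_le_card_biUnion (filter_subset _ _) ?_ fun p _ => by simpa using hL' p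
        rintro ⟨_ | t, b⟩ hp ⟨_ | t', b'⟩ hq hpq
        · simp [u] at hp
        · simp [u] at hp
        · simp [u] at hq
        · simpa [Function.onFun] using hquad t b t' b' (by simpa using hpq)
      have h3 : 3 * Fintype.card ι ≤ #u * Fintype.card ι := Nat.mul_le_mul_right _ (by omega)
      rw [mul_add_one] at hu
      omega)
    (fun s hs _ hhit => by
      obtain ⟨b, hb⟩ := hhit (.inr true)
      obtain ⟨b', hb'⟩ := hhit (.inr false)
      have := card_le_card (union_subset (subset_biUnion_of_mem (fun p => L' p \ ∅) hb)
        (subset_biUnion_of_mem (fun p => L' p \ ∅) hb'))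
      rw [sdiff_empty, sdiff_empty, card_union_of_disjoint (hquad _ _ _ _ (by simp))] at this
      have := hL' (.inr true, b); have := hL' (.inr false, b')
      simp at hs; omega)
  exact .of_appendPairs (.of_injective hf fun p => by simpa using hfL p)

theorem quadPairColorable_of_disjoint_pairs [Fintype ι] [DecidableEq ι]
    {L : ι × Bool → Finset α} {A : Fin 4 → Finset α}
    (hdisj : ∀ i, Disjoint (L (i, true)) (L (i, false)))
    (hL : ∀ p, Fintype.card ι + 1 ≤ #(L p)) (hA : ∀ j, Fintype.card ι + 1 ≤ #(A j))
    (hslack : Even (Fintype.card ι) ∨ ∃ j, Fintype.card ι + 2 ≤ #(A j)) :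
    QuadPairColorable L A := by
  by_cases hcover : ∃ c d, ∀ j, c ∈ A j ∨ d ∈ A j
  · obtain ⟨c, d, hcd⟩ := hcover
    exact quadPairColorable_of_two_cover hdisj hL hA hslack hcd
  push Not at hcover
  by_cases hshare : ∃ j₁ j₂, j₁ ≠ j₂ ∧ ¬ Disjoint (A j₁) (A j₂)
  · obtain ⟨j₁, j₂, hne, hshare⟩ := hshare
    obtain ⟨e, he₁, he₂⟩ := not_disjoint_iff.1 hshare
    exact quadPairColorable_of_not_two_cover hdisj hL hA hcover hne he₁ he₂
  push Not at hshare
  exact quadPairColorable_of_pairwise_disjoint hdisj hL hA hshare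

/-- The induction removes a pair whose two lists share a color; the parity slack is then
carried by a list of the big part that misses this color. -/
theorem quadPairColorable_of_card_add_one [Fintype ι] [DecidableEq ι] (L : ι × Bool → Finset α)
    (A : Fin 4 → Finset α) (hL : ∀ p, Fintype.card ι + 1 ≤ #(L p))
    (hA : ∀ j, Fintype.card ι + 1 ≤ #(A j))
    (hslack : Even (Fintype.card ι) ∨ ∃ j, Fintype.card ι + 2 ≤ #(A j)) :
    QuadPairColorable L A := by
  induction h : Fintype.card ι using Nat.strong_induction_on generalizing ι A with
  | _ n ih =>
  by_cases hdisj : ∀ i, Disjoint (L (i, true)) (L (i, false))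
  · exact quadPairColorable_of_disjoint_pairs hdisj hL hA hslack
  push Not at hdisj
  obtain ⟨i₀, hi₀⟩ := hdisj
  obtain ⟨e, het, hef⟩ := not_disjoint_iff.1 hi₀
  have he : ∀ b, e ∈ L (i₀, b) := Bool.forall_bool.2 ⟨hef, het⟩
  by_cases heA : ∀ j, e ∈ A j
  · exact quadPairColorable_of_forall_mem hL heA
  push Not at heA
  obtain ⟨j₀, hj₀⟩ := heA
  have hcard : Fintype.card {i // i ≠ i₀} = n - 1 := by simp [h]
  have hn : 0 < n := h ▸ Fintype.card_pos_iff.2 ⟨i₀⟩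
  have herase : ∀ s : Finset α, n + 1 ≤ #s → n ≤ #(s.erase e) := fun s hs => by
    have := pred_card_le_card_erase (s := s) (a := e); omega
  refine .extendPair he (ih (n - 1) (by omega) (ι := {i // i ≠ i₀}) _ _
    (fun p => ?_) (fun j => ?_) (.inr ⟨j₀, ?_⟩) hcard)
  · rw [hcard]; exact (Nat.sub_add_cancel hn).symm ▸ herase _ (h ▸ hL _)
  · rw [hcard]; exact (Nat.sub_add_cancel hn).symm ▸ herase _ (h ▸ hA _)
  · rw [hcard, erase_eq_of_notMem hj₀]; have := hA j₀; omega

end QuadPairs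

section Graph

open SimpleGraph

variable {ι : Type*}

theorem Choosable.colorable {V : Type*} {G : SimpleGraph V} {n : ℕ} (h : Choosable G n) :
    G.Colorable n := by
  obtain ⟨c, hc, hadj⟩ := h (fun _ => range n) (by simp)
  exact ⟨Coloring.mk (fun v => ⟨c v, mem_range.1 (hc v)⟩) fun hvw e =>
    hadj hvw (congrArg Fin.val e)⟩

theorem Choosable.card_le {κ : Type*} [Fintype κ] {V : κ → Type*} (f : ∀ k, V k) {n : ℕ}
    (h : Choosable (completeMultipartiteGraph V) n) : Fintype.card κ ≤ n := by
  have := h.colorable.chromaticNumber_le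
  rwa [completeMultipartiteGraph.chromaticNumber V f, Nat.cast_le] at this

theorem Choosable.of_iso {V W : Type*} {G : SimpleGraph V} {H : SimpleGraph W} (e : G ≃g H)
    {n : ℕ} (h : Choosable H n) : Choosable G n := fun L hL => by
  obtain ⟨c, hc, hadj⟩ := h (L ∘ e.symm) fun _ => hL _
  exact ⟨c ∘ e, fun v => by simpa using hc (e v), fun _ _ huw => hadj (e.map_rel_iff.2 huw)⟩

def SimpleGraph.Iso.completeMultipartiteGraph {κ : Type*} {V : ι → Type*} {W : κ → Type*}
    (e : ι ≃ κ) (f : ∀ i, V i ≃ W (e i)) : completeMultipartiteGraph V ≃g completeMultipartiteGraph W where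
  toEquiv := Equiv.sigmaCongr e f
  map_rel_iff' := by simp [Equiv.sigmaCongr]

/-- `K_{4,2*r}` with its pairs indexed by `ι`; the part `none` has size four. -/
abbrev quadPairsGraph (ι : Type*) : SimpleGraph (Σ o : Option ι, o.elim (Fin 4) fun _ => Bool) :=
  completeMultipartiteGraph fun o : Option ι => o.elim (Fin 4) fun _ => Bool

theorem QuadPairColorable.listColorable
    {L : (Σ o : Option ι, o.elim (Fin 4) fun _ => Bool) → Finset ℕ}
    (h : QuadPairColorable (fun p => L ⟨some p.1, p.2⟩) fun j => L ⟨none, j⟩) :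
    ListColorable (quadPairsGraph ι) L := by
  obtain ⟨c, a, ⟨hcL, hc⟩, ha, hac⟩ := h
  refine ⟨fun | ⟨none, j⟩ => a j | ⟨some i, b⟩ => c (i, b),
    fun | ⟨none, j⟩ => ha j | ⟨some i, b⟩ => hcL (i, b), ?_⟩
  rintro ⟨_ | i, x⟩ ⟨_ | i', y⟩ huw
  · simp at huw
  · exact hac x (i', y)
  · exact (hac y (i, x)).symm
  · exact hc (i, x) (i', y) (by simpa using huw)

theorem choosable_quadPairsGraph_of_even [Fintype ι] [DecidableEq ι]
    (h : Even (Fintype.card ι)) : Choosable (quadPairsGraph ι) (Fintype.card ι + 1) :=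
  fun _ hL => QuadPairColorable.listColorable <|
    quadPairColorable_of_card_add_one _ _ (fun _ => hL _) (fun _ => hL _) (.inl h)

theorem choosable_quadPairsGraph [Fintype ι] [DecidableEq ι] :
    Choosable (quadPairsGraph ι) (Fintype.card ι + 2) :=
  fun _ hL => QuadPairColorable.listColorable <|
    quadPairColorable_of_card_add_two (fun _ => hL _) fun _ => hL _

theorem Choosable.card_add_one_le [Fintype ι] {n : ℕ} (h : Choosable (quadPairsGraph ι) n) :
    Fintype.card ι + 1 ≤ n := by
  simpa using h.card_le fun | none => (0 : Fin 4) | some _ => true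

theorem exists_forall_eq_of_injective {α : Type*} [DecidableEq α] [Fintype ι] {f : ι → α}
    (hf : Injective f) {X : Finset α} (hfX : ∀ i, f i ∈ X) (hX : #X = Fintype.card ι + 1) :
    ∃ x ∈ X, ∀ z ∈ X, (∀ i, f i ≠ z) → z = x := by
  have hsub : univ.image f ⊆ X := image_subset_iff.2 fun i _ => hfX i
  obtain ⟨x, hx⟩ : ∃ x, X \ univ.image f = {x} := card_eq_one.1 (by
    rw [card_sdiff_of_subset hsub, card_image_of_injective _ hf, hX, card_univ]; omega)
  have hxX : x ∈ X \ univ.image f := hx ▸ mem_singleton_self x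
  refine ⟨x, (mem_sdiff.1 hxX).1, fun z hz hzf => ?_⟩
  have : z ∈ X \ univ.image f := mem_sdiff.2 ⟨hz, by simpa using hzf⟩
  rwa [hx, mem_singleton] at this

def quadrantList (m : ℕ) (S : Finset ℕ) : Finset ℕ :=
  (range m ×ˢ S).image fun p => 4 * p.1 + p.2

theorem mem_quadrantList {m : ℕ} {S : Finset ℕ} (hS : ∀ q ∈ S, q < 4) {x : ℕ} :
    x ∈ quadrantList m S ↔ x / 4 < m ∧ x % 4 ∈ S := by
  simp only [quadrantList, mem_image, mem_product, mem_range, Prod.exists]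
  constructor
  · rintro ⟨a, q, ⟨ha, hq⟩, rfl⟩
    have := hS q hq
    exact ⟨by omega, by rwa [show (4 * a + q) % 4 = q by omega]⟩
  · rintro ⟨h, hS⟩
    exact ⟨x / 4, x % 4, ⟨h, hS⟩, by omega⟩

theorem card_quadrantList {m : ℕ} {S : Finset ℕ} (hS : ∀ q ∈ S, q < 4) :
    #(quadrantList m S) = m * #S := by
  rw [quadrantList, card_image_of_injOn, card_product, card_range]
  rintro ⟨a, q⟩ hp ⟨a', q'⟩ hp' h
  simp only [coe_product, Set.mem_prod, mem_coe] at hp hp'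
  have := hS q hp.2; have := hS q' hp'.2
  simp only [Prod.mk.injEq] at h ⊢; omega

def bigPartResidues : Fin 4 → Finset ℕ := ![{0, 1}, {2, 3}, {0, 2}, {1, 3}]

theorem lt_four_of_mem_bigPartResidues : ∀ j, ∀ q ∈ bigPartResidues j, q < 4 := by
  decide

/-- Colors are `4a + q` with `a < m`; the two sides of the pairs take the residues `q ∈ {0, 3}`
and `q ∈ {1, 2}`. -/
def badLists (m : ℕ) : (Σ o : Option ι, o.elim (Fin 4) fun _ => Bool) → Finset ℕ
  | ⟨none, j⟩ => quadrantList m (bigPartResidues j)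
  | ⟨some _, b⟩ => quadrantList m (bif b then {0, 3} else {1, 2})

theorem card_badLists (m : ℕ) :
    ∀ v : Σ o : Option ι, o.elim (Fin 4) fun _ => Bool, #(badLists m v) = m * 2
  | ⟨none, (j : Fin 4)⟩ => by
    simp only [badLists]
    rw [card_quadrantList (lt_four_of_mem_bigPartResidues j)]
    fin_cases j <;> rfl
  | ⟨some _, b⟩ => by cases b <;> simp [badLists, card_quadrantList]

theorem not_choosable_quadPairsGraph_of_odd [Fintype ι] (h : Odd (Fintype.card ι)) :
    ¬ Choosable (quadPairsGraph ι) (Fintype.card ι + 1) := by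
  obtain ⟨m, hm⟩ : ∃ m, Fintype.card ι + 1 = m * 2 := by
    obtain ⟨k, hk⟩ := h; exact ⟨k + 1, by omega⟩
  intro hch
  obtain ⟨c, hc, hadj⟩ := hch (badLists m) fun v => (card_badLists m v).symm ▸ hm.le
  have hside : ∀ b, ∃ x ∈ quadrantList m (bif b then {0, 3} else {1, 2}),
      ∀ z ∈ quadrantList m (bif b then {0, 3} else {1, 2}), (∀ i, c ⟨some i, b⟩ ≠ z) → z = x :=
    fun b => exists_forall_eq_of_injective (f := fun i => c ⟨some i, b⟩)
      (fun i i' h => by by_contra hne; exact hadj (by simpa using hne) h) (fun i => hc ⟨some i, b⟩)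
      (by cases b <;> simp [card_quadrantList, hm])
  obtain ⟨x, hxX, hx⟩ := hside true
  obtain ⟨y, hyY, hy⟩ := hside false
  have hbig : ∀ j : Fin 4, (c ⟨none, j⟩ = x ∨ c ⟨none, j⟩ = y) ∧
      c ⟨none, j⟩ % 4 ∈ bigPartResidues j := fun j => by
    have hj := (mem_quadrantList (lt_four_of_mem_bigPartResidues j)).1 (hc ⟨none, j⟩)
    have hne : ∀ i b, c ⟨some i, b⟩ ≠ c ⟨none, j⟩ := fun i b => hadj (by simp)
    refine ⟨?_, hj.2⟩
    have : c ⟨none, j⟩ % 4 ∈ ({0, 3} : Finset ℕ) ∨ c ⟨none, j⟩ % 4 ∈ ({1, 2} : Finset ℕ) := by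
      have := hj.2; fin_cases j <;> simp [bigPartResidues] at this ⊢ <;> omega
    rcases this with h | h
    · exact .inl (hx _ ((mem_quadrantList (by decide)).2 ⟨hj.1, h⟩) fun i => hne i true)
    · exact .inr (hy _ ((mem_quadrantList (by decide)).2 ⟨hj.1, h⟩) fun i => hne i false)
  have hx4 := ((mem_quadrantList (by decide)).1 hxX).2
  have hy4 := ((mem_quadrantList (by decide)).1 hyY).2
  have h0 := hbig 0; have h1 := hbig 1; have h2 := hbig 2; have h3 := hbig 3
  simp [bigPartResidues] at hx4 hy4 h0 h1 h2 h3
  omega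

theorem nonempty_iso_quadPairsGraph (r : ℕ) :
    Nonempty (SimpleGraph.completeMultipartiteGraph (fun i : Fin (r + 1) =>
      Fin (if i.val = 0 then 4 else 2)) ≃g quadPairsGraph (Fin r)) := by
  refine ⟨Iso.completeMultipartiteGraph (finSuccEquiv r) fun i => ?_⟩
  induction i using Fin.cases with
  | zero => exact Equiv.cast (by simp)
  | succ j => exact (Equiv.cast (by simp)).trans (finTwoEquiv.trans (Equiv.cast (by simp)))

end Graph

/-- Enomoto–Ohba–Ota–Sakamoto: `Ch(K_{4,2*(k-1)})` is `k` if `k` is odd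
and `k + 1` if `k` is even. -/
theorem choiceNumber_K4_2xk1 (k : ℕ) (hk : 2 ≤ k) :
    IsLeast {n | Choosable (SimpleGraph.completeMultipartiteGraph
      (fun i : Fin k => Fin (if i.val = 0 then 4 else 2))) n}
      (if Odd k then k else k + 1) := by
  obtain ⟨r, rfl⟩ : ∃ r, k = r + 1 := ⟨k - 1, by omega⟩
  obtain ⟨e⟩ := nonempty_iso_quadPairsGraph r
  have hchoosable : ∀ n, Choosable (SimpleGraph.completeMultipartiteGraph
      (fun i : Fin (r + 1) => Fin (if i.val = 0 then 4 else 2))) n ↔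
      Choosable (quadPairsGraph (Fin r)) n := fun n => ⟨.of_iso e.symm, .of_iso e⟩
  have hle : ∀ {n}, Choosable (quadPairsGraph (Fin r)) n → r + 1 ≤ n := fun h => by
    simpa using h.card_add_one_le
  simp only [hchoosable, Nat.odd_add_one, Nat.not_odd_iff_even]
  split_ifs with hr
  · exact ⟨by simpa using choosable_quadPairsGraph_of_even (ι := Fin r) (by simpa using hr),
      fun _ => hle⟩
  · refine ⟨by simpa using choosable_quadPairsGraph (ι := Fin r), fun n hn => (hle hn).lt_of_ne ?_⟩
    rintro rfl
    exact not_choosable_quadPairsGraph_of_odd (ι := Fin r)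
      (by simpa using Nat.not_even_iff_odd.1 hr) (by simpa using hn)
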